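/- If a binary word f has a 1-tilde-error overlap of type swap, then f is tilde-non-isometric; moreover, if the overlap has shift r and swap position i, then the pair u = pre_r(f)·R_i(f) and v = pre_r(f)·R_{i+1}(f) is a pair of tilde-witnesses for f. -/
import Mathlib


/-- Edit operations on binary words: `R i` flips the bit at position `i`,
`S i` swaps the (distinct) bits at positions `i` and `i+1`. Positions are 0-based. -/
inductive TOp where
  | R (i : ℕ)
  | S (i : ℕ)
deriving DecidableEq

namespace TOp

def apply : TOp → List Bool → List Bool
  | R i, w => w.set i (!(w.getD i false))
  | S i, w => (w.set i (w.getD (i+1) false)).set (i+1) (w.getD i false)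

def valid : TOp → List Bool → Prop
  | R i, w => i < w.length
  | S i, w => i + 1 < w.length ∧ w.getD i false ≠ w.getD (i+1) false

/-- The set of positions modified by an operation. -/
def positions : TOp → Finset ℕ
  | R i => {i}
  | S i => {i, i+1}

/-- The (leftmost) position of an operation. -/
def pos : TOp → ℕ
  | R i => i
  | S i => i

def isR : TOp → Prop
  | R _ => True
  | S _ => False

def isS : TOp → Prop
  | R _ => False
  | S _ => True

end TOp

/-- All operations of a sequence are valid when applied successively starting from `w`. -/
def validSeq : List TOp → List Bool → Prop
  | [], _ => True
  | o :: os, w => o.valid w ∧ validSeq os (o.apply w)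

def applySeq : List TOp → List Bool → List Bool
  | [], w => w
  | o :: os, w => applySeq os (o.apply w)

/-- `ops` is a tilde-transformation from `u` to `v`. -/
def Transforms (ops : List TOp) (u v : List Bool) : Prop :=
  validSeq ops u ∧ applySeq ops u = v

/-- The swap-mismatch (tilde) distance between two words. -/
noncomputable def tdist (u v : List Bool) : ℕ :=
  sInf { n | ∃ ops : List TOp, ops.length = n ∧ Transforms ops u v }

/-- Each position of the word is modified at most once along the sequence. -/
def eachPosOnce (ops : List TOp) : Prop :=
  ops.Pairwise fun o o' => Disjoint o.positions o'.positions

/-- A minimal tilde-transformation: length `tdist u v`, each position changed at most once. -/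
def MinimalTransf (ops : List TOp) (u v : List Bool) : Prop :=
  Transforms ops u v ∧ ops.length = tdist u v ∧ eachPosOnce ops

/-- The list of all words `w_0 = u, w_1, …, w_h` visited by the transformation. -/
def trajectory (ops : List TOp) (u : List Bool) : List (List Bool) :=
  List.scanl (fun w o => o.apply w) u ops

/-- `w` avoids `f` as a factor. -/
def FFree (f w : List Bool) : Prop := ¬ f <:+: w

/-- All words along the transformation are `f`-free. -/
def FreeTransf (f : List Bool) (ops : List TOp) (u : List Bool) : Prop :=
  ∀ w ∈ trajectory ops u, FFree f w

/-- `f` is tilde-isometric. -/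
def TildeIsometric (f : List Bool) : Prop :=
  ∀ u v : List Bool, u.length = v.length → f.length < u.length →
    FFree f u → FFree f v →
      ∃ ops : List TOp, MinimalTransf ops u v ∧ FreeTransf f ops u

/-- `(u,v)` is a pair of tilde-witnesses for `f`. -/
def Witnesses (f u v : List Bool) : Prop :=
  u.length = v.length ∧ FFree f u ∧ FFree f v ∧ 2 ≤ tdist u v ∧
    ∀ ops : List TOp, MinimalTransf ops u v → ¬ FreeTransf f ops u

/-- Hamming distance between equal-length words (number of mismatch positions). -/
def hdist (u v : List Bool) : ℕ := ((u.zip v).filter fun p => p.1 != p.2).length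

section SwapHelpers

open TOp

lemma length_apply (o : TOp) (w : List Bool) : (o.apply w).length = w.length := by
  cases o <;> simp [TOp.apply]

lemma getElem?_eq_some_getD {w : List Bool} {k : ℕ} (h : k < w.length) :
    w[k]? = some (w.getD k false) := by
  rw [List.getD_eq_getElem?_getD, List.getElem?_eq_getElem h]; rfl

lemma getElem?_apply_R (p : ℕ) (w : List Bool) (k : ℕ) :
    ((R p).apply w)[k]? = if k = p then w[k]?.map (fun b => !b) else w[k]? := by
  simp only [TOp.apply, List.getElem?_set, List.getD_eq_getElem?_getD]
  rcases eq_or_ne k p with rfl | h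
  · simp only [if_pos rfl]
    by_cases hk : k < w.length
    · simp [hk, List.getElem?_eq_getElem hk]
    · simp [hk, List.getElem?_eq_none (le_of_not_gt hk)]
  · simp [h, Ne.symm h]

lemma getElem?_apply_S (p : ℕ) (w : List Bool) (h2 : p + 1 < w.length) (k : ℕ) :
    ((S p).apply w)[k]? = if k = p then w[p+1]? else if k = p+1 then w[p]? else w[k]? := by
  have h1 : p < w.length := by omega
  simp only [TOp.apply, List.getElem?_set, List.length_set, List.getD_eq_getElem?_getD]
  by_cases h : k = p
  · have hne : ¬ (p + 1 = k) := by omega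
    simp [hne, h, h1, List.getElem?_eq_getElem h2]
  · by_cases h' : k = p + 1
    · simp [h', h2, List.getElem?_eq_getElem h1]
    · have e1 : ¬ (p + 1 = k) := fun hh => h' hh.symm
      have e2 : ¬ (p = k) := fun hh => h hh.symm
      simp [e1, e2, h, h']

lemma apply_getElem?_of_not_mem (o : TOp) (w : List Bool) (k : ℕ) (hk : k ∉ o.positions) :
    (o.apply w)[k]? = w[k]? := by
  cases o with
  | R p =>
    simp only [TOp.positions, Finset.mem_singleton] at hk
    rw [getElem?_apply_R, if_neg hk]
  | S p =>
    simp only [TOp.positions, Finset.mem_insert, Finset.mem_singleton, not_or] at hk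
    simp only [TOp.apply, List.getElem?_set]
    rw [if_neg (by omega), if_neg (by omega)]

lemma apply_flip_of_mem (o : TOp) (w : List Bool) (hv : o.valid w) (k : ℕ)
    (hk : k ∈ o.positions) :
    k < w.length ∧ (o.apply w)[k]? = some (!(w.getD k false)) := by
  cases o with
  | R p =>
    simp only [TOp.positions, Finset.mem_singleton] at hk
    subst hk
    have hp : k < w.length := hv
    refine ⟨hp, ?_⟩
    rw [getElem?_apply_R, if_pos rfl, List.getElem?_eq_getElem hp]
    simp [List.getD_eq_getElem?_getD, List.getElem?_eq_getElem hp]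
  | S p =>
    obtain ⟨h2, hne⟩ := hv
    have h1 : p < w.length := by omega
    have hflip : w.getD (p+1) false = !(w.getD p false) := by
      revert hne; cases hgp : w.getD p false <;> cases hgp1 : w.getD (p+1) false <;> simp
    have hflip' : w.getD p false = !(w.getD (p+1) false) := by
      rw [hflip]; simp
    have gp : w[p]? = some (w.getD p false) := getElem?_eq_some_getD h1
    have gp1 : w[p+1]? = some (w.getD (p+1) false) := getElem?_eq_some_getD h2
    simp only [TOp.positions, Finset.mem_insert, Finset.mem_singleton] at hk
    rcases hk with rfl | rfl
    · refine ⟨h1, ?_⟩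
      rw [getElem?_apply_S _ w h2, if_pos rfl, gp1, hflip]
    · refine ⟨h2, ?_⟩
      rw [getElem?_apply_S _ w h2, if_neg (by omega), if_pos rfl, gp, hflip']

lemma infix_offset {f w : List Bool} (h : f <:+: w) :
    ∃ p, p + f.length ≤ w.length ∧ ∀ k, k < f.length → w[p + k]? = f[k]? := by
  obtain ⟨s, t, hst⟩ := h
  refine ⟨s.length, ?_, ?_⟩
  · rw [← hst, List.append_assoc, List.length_append, List.length_append]; omega
  · intro k hk
    rw [← hst, List.append_assoc, List.getElem?_append, if_neg (by omega)]
    have e : s.length + k - s.length = k := by omega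
    rw [e, List.getElem?_append, if_pos hk]

lemma some_ne_some_not (b : Bool) : (some b : Option Bool) ≠ some (!b) := by
  cases b <;> simp

end SwapHelpers


theorem stmt9 (f : List Bool) (n r i : ℕ) (hn : n = f.length) (hr1 : 1 ≤ r) (hr : r < n)
    (hvalid : (TOp.S i).valid (f.take (n - r)))
    (hov : (TOp.S i).apply (f.take (n - r)) = f.drop r) :
    Witnesses f (f.take r ++ (TOp.R i).apply f) (f.take r ++ (TOp.R (i+1)).apply f) ∧
    ¬ TildeIsometric f := by
  set u := f.take r ++ (TOp.R i).apply f with hu_def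
  set v := f.take r ++ (TOp.R (i+1)).apply f with hv_def
  have hrn : r ≤ n := le_of_lt hr
  have htl : (f.take (n-r)).length = n - r := by
    rw [List.length_take, ← hn]; omega
  have hil : i + 1 < n - r := by
    have h := hvalid.1; rwa [htl] at h
  have hrin : r + i < n := by omega
  have hrin1 : r + i + 1 < n := by omega
  have hin : i + 1 < n := by omega
  have fgetsome : ∀ k, k < n → f[k]? = some (f.getD k false) := by
    intro k hk
    exact getElem?_eq_some_getD (by omega)
  have take_getD : ∀ j, j < n - r → (f.take (n-r)).getD j false = f.getD j false := by
    intro j hj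
    rw [List.getD_eq_getElem?_getD, List.getD_eq_getElem?_getD, List.getElem?_take, if_pos hj]
  have fne : f.getD i false ≠ f.getD (i+1) false := by
    have h := hvalid.2
    rwa [take_getD i (by omega), take_getD (i+1) (by omega)] at h
  have hb0 : f.getD (i+1) false = !(f.getD i false) := Bool.eq_not_iff.mpr fne.symm
  set a := f.getD i false with ha
  have hb : f.getD (i+1) false = !a := hb0
  have fi : f[i]? = some a := fgetsome i (by omega)
  have fi1 : f[i+1]? = some (!a) := by rw [fgetsome (i+1) hin, hb]
  -- overlap facts
  have h2' : i + 1 < (f.take (n-r)).length := by rw [htl]; exact hil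
  have hov' : ∀ jj, ((TOp.S i).apply (f.take (n-r)))[jj]? = f[r + jj]? := by
    intro jj; rw [hov, List.getElem?_drop]
  have hAi : f[r+i]? = f[i+1]? := by
    have h := hov' i
    rw [getElem?_apply_S _ _ h2', if_pos rfl, List.getElem?_take, if_pos hil] at h
    exact h.symm
  have hAi1 : f[r+i+1]? = f[i]? := by
    have h := hov' (i+1)
    rw [getElem?_apply_S _ _ h2', if_neg (by omega), if_pos rfl, List.getElem?_take,
      if_pos (by omega)] at h
    exact h.symm
  have hA : ∀ j, j < n - r → j ≠ i → j ≠ i + 1 → f[r+j]? = f[j]? := by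
    intro j hj hji hji1
    have h := hov' j
    rw [getElem?_apply_S _ _ h2', if_neg hji, if_neg hji1, List.getElem?_take, if_pos hj] at h
    exact h.symm
  have fri : f[r+i]? = some (!a) := by rw [hAi, fi1]
  have fri1 : f[r+i+1]? = some a := by rw [hAi1, fi]
  -- u, v access
  have hltake : (f.take r).length = r := by rw [List.length_take, ← hn]; omega
  have hulen : u.length = r + n := by
    rw [hu_def, List.length_append, hltake, length_apply, ← hn]
  have hvlen : v.length = r + n := by
    rw [hv_def, List.length_append, hltake, length_apply, ← hn]
  have ug_lt : ∀ k, k < r → u[k]? = f[k]? := by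
    intro k hk
    rw [hu_def, List.getElem?_append, hltake, if_pos hk, List.getElem?_take, if_pos hk]
  have vg_lt : ∀ k, k < r → v[k]? = f[k]? := by
    intro k hk
    rw [hv_def, List.getElem?_append, hltake, if_pos hk, List.getElem?_take, if_pos hk]
  have ug_hi : ∀ j, j ≠ i → u[r+j]? = f[j]? := by
    intro j hj
    rw [hu_def, List.getElem?_append, hltake, if_neg (by omega)]
    have e : r + j - r = j := by omega
    rw [e, getElem?_apply_R, if_neg hj]
  have vg_hi : ∀ j, j ≠ i + 1 → v[r+j]? = f[j]? := by
    intro j hj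
    rw [hv_def, List.getElem?_append, hltake, if_neg (by omega)]
    have e : r + j - r = j := by omega
    rw [e, getElem?_apply_R, if_neg hj]
  have ug_i : u[r+i]? = some (!a) := by
    rw [hu_def, List.getElem?_append, hltake, if_neg (by omega)]
    have e : r + i - r = i := by omega
    rw [e, getElem?_apply_R, if_pos rfl, fi]; rfl
  have vg_i1 : v[r+i+1]? = some a := by
    rw [hv_def, List.getElem?_append, hltake, if_neg (by omega)]
    have e : r + i + 1 - r = i + 1 := by omega
    rw [e, getElem?_apply_R, if_pos rfl, fi1]; simp
  have u_i1 : u[r+i+1]? = some (!a) := by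
    have e : r + i + 1 = r + (i+1) := by omega
    rw [e, ug_hi (i+1) (by omega), fi1]
  have v_i : v[r+i]? = some a := by
    rw [vg_hi i (by omega), fi]
  have duv : ∀ k, k ≠ r + i → k ≠ r + i + 1 → u[k]? = v[k]? := by
    intro k h1 h2
    rcases lt_or_ge k r with h | h
    · rw [ug_lt k h, vg_lt k h]
    · have e : k = r + (k - r) := by omega
      rw [e, ug_hi _ (by omega), vg_hi _ (by omega)]
  -- f-freeness of u
  have hFu : FFree f u := by
    intro hinf
    obtain ⟨p, hpb, hO⟩ := infix_offset hinf
    rw [hulen, ← hn] at hpb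
    have O : ∀ k, k < n → u[p + k]? = f[k]? := by
      intro k hk; exact hO k (by omega)
    by_cases hpr : p = r
    · have h := O i (by omega)
      rw [hpr, ug_i, fi] at h
      exact some_ne_some_not a (h.symm)
    · by_cases hp0 : p = 0
      · subst hp0
        have h := O (r+i+1) (by omega)
        rw [Nat.zero_add] at h
        rw [u_i1, fri1] at h
        exact some_ne_some_not a h.symm
      · have hplt : 0 < p ∧ p < r := by omega
        have hα : f[p+i]? = some (!a) := by
          have h := O (r+i) (by omega)
          have e : p + (r + i) = r + (p + i) := by omega
          rw [e, ug_hi (p+i) (by omega), fri] at h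
          exact h
        have hβ := O i (by omega)
        rw [fi] at hβ
        by_cases hc : p + i < r
        · rw [ug_lt _ hc] at hβ
          rw [hβ] at hα
          exact some_ne_some_not a hα
        · have e : p + i = r + (p + i - r) := by omega
          rw [e, ug_hi (p + i - r) (by omega)] at hβ
          have hAj := hA (p + i - r) (by omega) (by omega) (by omega)
          rw [hβ, ← e] at hAj
          rw [hAj] at hα
          exact some_ne_some_not a hα
  -- f-freeness of v
  have hFv : FFree f v := by
    intro hinf
    obtain ⟨p, hpb, hO⟩ := infix_offset hinf
    rw [hvlen, ← hn] at hpb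
    have O : ∀ k, k < n → v[p + k]? = f[k]? := by
      intro k hk; exact hO k (by omega)
    by_cases hpr : p = r
    · have h := O (i+1) (by omega)
      have e : p + (i + 1) = r + i + 1 := by omega
      rw [e, vg_i1, fi1] at h
      exact some_ne_some_not a h
    · by_cases hp0 : p = 0
      · subst hp0
        have h := O (r+i) (by omega)
        rw [Nat.zero_add, v_i, fri] at h
        exact some_ne_some_not a h
      · have hplt : 0 < p ∧ p < r := by omega
        have hα : f[p+i+1]? = some a := by
          have h := O (r+i+1) (by omega)
          have e : p + (r + i + 1) = r + (p + i + 1) := by omega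
          rw [e, vg_hi (p+i+1) (by omega), fri1] at h
          exact h
        have hβ := O (i+1) (by omega)
        have e0 : p + (i+1) = p + i + 1 := by omega
        rw [e0, fi1] at hβ
        by_cases hc : p + i + 1 < r
        · rw [vg_lt _ hc] at hβ
          rw [hβ] at hα
          exact some_ne_some_not a hα.symm
        · by_cases hj : p + i + 1 - r = i
          · have e : p + i + 1 = r + i := by omega
            rw [e, fri] at hα
            exact some_ne_some_not a hα.symm
          · have e : p + i + 1 = r + (p + i + 1 - r) := by omega
            rw [e, vg_hi (p + i + 1 - r) (by omega)] at hβ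
            have hAj := hA (p + i + 1 - r) (by omega) hj (by omega)
            rw [hβ, ← e] at hAj
            rw [hAj] at hα
            exact some_ne_some_not a hα.symm
  -- the two-step transformation
  have happly2 : (TOp.R (r+i+1)).apply ((TOp.R (r+i)).apply u) = v := by
    apply List.ext_getElem?
    intro k
    rw [getElem?_apply_R, getElem?_apply_R]
    by_cases h1 : k = r + i + 1
    · subst h1
      rw [if_pos rfl, if_neg (by omega), u_i1, vg_i1]; simp
    · rw [if_neg h1]
      by_cases h2 : k = r + i
      · subst h2
        rw [if_pos rfl, ug_i, v_i]; simp
      · rw [if_neg h2]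
        exact duv k h2 h1
  have hT2 : Transforms [TOp.R (r+i), TOp.R (r+i+1)] u v := by
    refine ⟨⟨?_, ?_, trivial⟩, ?_⟩
    · show r + i < u.length
      rw [hulen]; omega
    · show r + i + 1 < ((TOp.R (r+i)).apply u).length
      rw [length_apply, hulen]; omega
    · show (TOp.R (r+i+1)).apply ((TOp.R (r+i)).apply u) = v
      exact happly2
  have huv : u ≠ v := by
    intro he
    have h : some (!a) = some a := by rw [← ug_i, he, v_i]
    exact some_ne_some_not a h.symm
  have hset : ∀ m, (∃ ops : List TOp, ops.length = m ∧ Transforms ops u v) → 2 ≤ m := by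
    rintro m ⟨ops, hlen, htr⟩
    match ops, hlen with
    | [], hlen =>
      exfalso
      exact huv htr.2
    | [o], hlen =>
      exfalso
      obtain ⟨⟨hval, -⟩, happ⟩ := htr
      have happ' : o.apply u = v := happ
      have m1 : r + i ∈ o.positions := by
        by_contra hmem
        have h := apply_getElem?_of_not_mem o u _ hmem
        rw [happ', v_i, ug_i] at h
        exact some_ne_some_not (!a) (by simpa using h.symm)
      have m2 : r + i + 1 ∈ o.positions := by
        by_contra hmem
        have h := apply_getElem?_of_not_mem o u _ hmem
        rw [happ', vg_i1, u_i1] at h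
        exact some_ne_some_not (!a) (by simpa using h.symm)
      cases o with
      | R p =>
        simp only [TOp.positions, Finset.mem_singleton] at m1 m2
        omega
      | S p =>
        simp only [TOp.positions, Finset.mem_insert, Finset.mem_singleton] at m1 m2
        have hp : p = r + i := by omega
        subst hp
        have hval' : (TOp.S (r+i)).valid u := hval
        have hne2 := hval'.2
        have e1 : u.getD (r+i) false = !a := by
          rw [List.getD_eq_getElem?_getD, ug_i]; rfl
        have e2 : u.getD (r+i+1) false = !a := by
          rw [List.getD_eq_getElem?_getD, u_i1]; rfl
        rw [e1, e2] at hne2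
        exact hne2 rfl
    | o1 :: o2 :: rest, hlen =>
      simp only [List.length_cons] at hlen
      omega
  have htd : tdist u v = 2 := by
    have h2mem : (2 : ℕ) ∈ {m | ∃ ops : List TOp, ops.length = m ∧ Transforms ops u v} :=
      ⟨[TOp.R (r+i), TOp.R (r+i+1)], rfl, hT2⟩
    have hle : tdist u v ≤ 2 := Nat.sInf_le h2mem
    have hmemInf := Nat.sInf_mem (Set.nonempty_of_mem h2mem)
    have hge : 2 ≤ tdist u v := hset _ hmemInf
    omega
  -- minimal transformations are not f-free
  have hW5 : ∀ ops : List TOp, MinimalTransf ops u v → ¬ FreeTransf f ops u := by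
    intro ops hmin hfree
    obtain ⟨⟨hvalseq, happ⟩, hlen, hponce⟩ := hmin
    rw [htd] at hlen
    obtain ⟨o1, o2, rfl⟩ := List.length_eq_two.mp hlen
    obtain ⟨hv1, hv2, -⟩ := hvalseq
    have happ' : o2.apply (o1.apply u) = v := happ
    have hdisj : Disjoint o1.positions o2.positions := by
      have h := hponce
      simp only [eachPosOnce, List.pairwise_cons, List.mem_singleton, List.mem_cons,
        List.not_mem_nil, or_false, forall_eq, List.Pairwise.nil] at h
      exact h.1
    have hmem1 : ∀ k ∈ o1.positions, k = r + i ∨ k = r + i + 1 := by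
      intro k hk
      have hk2 : k ∉ o2.positions := Finset.disjoint_left.mp hdisj hk
      obtain ⟨hklen, hkflip⟩ := apply_flip_of_mem o1 u hv1 k hk
      have hvk : v[k]? = some (!(u.getD k false)) := by
        rw [← happ', apply_getElem?_of_not_mem o2 _ k hk2, hkflip]
      have huk : u[k]? = some (u.getD k false) := getElem?_eq_some_getD hklen
      by_contra hcon
      push_neg at hcon
      have h := duv k hcon.1 hcon.2
      rw [huk, hvk] at h
      exact some_ne_some_not _ h
    have hmem2 : ∀ k ∈ o2.positions, k = r + i ∨ k = r + i + 1 := by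
      intro k hk
      have hk1 : k ∉ o1.positions := Finset.disjoint_right.mp hdisj hk
      obtain ⟨hklen, hkflip⟩ := apply_flip_of_mem o2 (o1.apply u) hv2 k hk
      have hvk : v[k]? = some (!((o1.apply u).getD k false)) := by
        rw [← happ', hkflip]
      have huk : u[k]? = some ((o1.apply u).getD k false) := by
        rw [← apply_getElem?_of_not_mem o1 u k hk1]
        exact getElem?_eq_some_getD hklen
      by_contra hcon
      push_neg at hcon
      have h := duv k hcon.1 hcon.2
      rw [huk, hvk] at h
      exact some_ne_some_not _ h
    obtain ⟨p1, hp1⟩ : ∃ p, o1 = TOp.R p := by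
      cases o1 with
      | R p => exact ⟨p, rfl⟩
      | S p =>
        exfalso
        have hm1 := hmem1 p (by simp [TOp.positions])
        have hm2 := hmem1 (p+1) (by simp [TOp.positions])
        obtain ⟨q, hq⟩ : ∃ q, q ∈ o2.positions := by
          cases o2 with
          | R m => exact ⟨m, by simp [TOp.positions]⟩
          | S m => exact ⟨m, by simp [TOp.positions]⟩
        have hm3 := hmem2 q hq
        have hq1 : q ∉ (TOp.S p).positions := Finset.disjoint_right.mp hdisj hq
        simp only [TOp.positions, Finset.mem_insert, Finset.mem_singleton, not_or] at hq1
        omega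
    subst hp1
    have hp1mem : p1 = r + i ∨ p1 = r + i + 1 :=
      hmem1 p1 (by simp [TOp.positions])
    have hwmem : (TOp.R p1).apply u ∈ trajectory [TOp.R p1, o2] u := by
      show (TOp.R p1).apply u ∈ List.scanl (fun w o => o.apply w) u [TOp.R p1, o2]
      simp [List.scanl]
    have hfw := hfree _ hwmem
    apply hfw
    rcases hp1mem with rfl | rfl
    · -- intermediate word is (take r f) ++ f
      have hweq : (TOp.R (r+i)).apply u = f.take r ++ f := by
        apply List.ext_getElem?
        intro k
        have hRHS : (f.take r ++ f)[k]? = if k < r then f[k]? else f[k - r]? := by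
          rw [List.getElem?_append, hltake]
          by_cases hkr : k < r
          · rw [if_pos hkr, if_pos hkr, List.getElem?_take, if_pos hkr]
          · rw [if_neg hkr, if_neg hkr]
        rw [getElem?_apply_R, hRHS]
        by_cases hk : k = r + i
        · subst hk
          rw [if_pos rfl, if_neg (by omega), ug_i]
          have e : r + i - r = i := by omega
          rw [e, fi]; simp
        · rw [if_neg hk]
          by_cases hkr : k < r
          · rw [if_pos hkr, ug_lt k hkr]
          · rw [if_neg hkr]
            obtain ⟨j, rfl⟩ : ∃ j, k = r + j := ⟨k - r, by omega⟩
            rw [ug_hi j (by omega)]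
            have e : r + j - r = j := by omega
            rw [e]
      exact ⟨f.take r, [], by rw [hweq]; simp⟩
    · -- intermediate word has f as a prefix
      have hweq : (TOp.R (r+i+1)).apply u = f ++ f.drop (n - r) := by
        apply List.ext_getElem?
        intro k
        have hRHS : (f ++ f.drop (n - r))[k]? = if k < n then f[k]? else f[n - r + (k - n)]? := by
          rw [List.getElem?_append, ← hn]
          by_cases hkn : k < n
          · rw [if_pos hkn, if_pos hkn]
          · rw [if_neg hkn, if_neg hkn, List.getElem?_drop]
        rw [getElem?_apply_R, hRHS]
        by_cases hk : k = r + i + 1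
        · subst hk
          rw [if_pos rfl, if_pos (by omega), u_i1, fri1]; simp
        · rw [if_neg hk]
          by_cases hkn : k < n
          · rw [if_pos hkn]
            by_cases hkr : k < r
            · rw [ug_lt k hkr]
            · by_cases hki : k = r + i
              · rw [hki, ug_i, fri]
              · obtain ⟨j, rfl⟩ : ∃ j, k = r + j := ⟨k - r, by omega⟩
                rw [ug_hi j (by omega)]
                exact (hA j (by omega) (by omega) (by omega)).symm
          · rw [if_neg hkn]
            obtain ⟨j, rfl⟩ : ∃ j, k = r + j := ⟨k - r, by omega⟩
            rw [ug_hi j (by omega)]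
            have e2 : n - r + (r + j - n) = j := by omega
            rw [e2]
      exact ⟨[], f.drop (n - r), by rw [hweq]; simp⟩
  have hW : Witnesses f u v := by
    refine ⟨hulen.trans hvlen.symm, hFu, hFv, by rw [htd], hW5⟩
  refine ⟨hW, ?_⟩
  intro hiso
  obtain ⟨ops, hmin, hfree⟩ := hiso u v (hulen.trans hvlen.symm)
    (by rw [hulen, ← hn]; omega) hFu hFv
  exact hW5 ops hmin hfree
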